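/- arXiv:2008.09312 — 4 statements merged into one kernel-verified Lean document; each statement's English description precedes it below -/
import Mathlib

section
/- Let (X_j)_{j≥1} be an i.i.d. sequence of random variables on a probability space such that each X_j − μ has sub-Gaussian moment generating function with variance proxy σ² (i.e., E[exp(s(X_j − μ))] ≤ exp(s²σ²/2) for all real s). Then the probability that there exists an integer n ≥ 1 with |(1/n)·Σ_{j=1}^n X_j − μ| ≥ β(n) is at most δ/K. -/
/-!
Centre the variables at `μ`. Their partial sums over `{1, …, n}` are sub-Gaussian with variance
proxy `nσ²`, so the Chernoff bound on both tails gives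
`ℙ(|S̄ₙ - μ| ≥ β(n)) ≤ 2 exp(-n β(n)² / (2σ²)) ≤ 6δ / (π² K n²)`, because
`n β(n)² / (2σ²) ≥ log(π² K n² / (3δ))`. A union bound over `n ≥ 1` and `∑ 1/n² = π²/6` finish.
-/

open Real MeasureTheory ProbabilityTheory

/-- `β(n) = sqrt((2σ²/n) · log(π²·K·n²/(3δ)))` for integers `n ≥ 1`. -/
noncomputable def attackBeta (σ : ℝ) (K : ℕ) (δ : ℝ) (n : ℕ) : ℝ :=
  Real.sqrt (2 * σ ^ 2 / n * Real.log (Real.pi ^ 2 * K * n ^ 2 / (3 * δ)))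

open scoped NNReal
open Finset

namespace ProbabilityTheory.HasSubgaussianMGF

variable {Ω : Type*} {m : MeasurableSpace Ω} {μ : Measure Ω}

lemma measureReal_abs_ge_le {X : Ω → ℝ} {c : ℝ≥0} (h : HasSubgaussianMGF X c μ) {ε : ℝ}
    (hε : 0 ≤ ε) : μ.real {ω | ε ≤ |X ω|} ≤ 2 * exp (-ε ^ 2 / (2 * c)) := by
  have hsplit : {ω | ε ≤ |X ω|} = {ω | ε ≤ X ω} ∪ {ω | ε ≤ (-X) ω} := by
    ext ω; simp [le_abs]
  rw [hsplit, two_mul]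
  exact (measureReal_union_le _ _).trans
    (add_le_add (h.measure_ge_le hε) (h.neg.measure_ge_le hε))

lemma measureReal_abs_mean_sub_ge_le {ι : Type*} {X : ι → Ω → ℝ} {a : ℝ} {c : ℝ≥0}
    (hindep : iIndepFun X μ) (hsub : ∀ i, HasSubgaussianMGF (fun ω ↦ X i ω - a) c μ)
    {s : Finset ι} (hs : s.Nonempty) {t : ℝ} (ht : 0 ≤ t) :
    μ.real {ω | t ≤ |(∑ i ∈ s, X i ω) / #s - a|} ≤ 2 * exp (-#s * t ^ 2 / (2 * c)) := by
  have hcard : (0 : ℝ) < #s := by exact_mod_cast hs.card_pos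
  have hsum : HasSubgaussianMGF (fun ω ↦ ∑ i ∈ s, (X i ω - a)) (∑ _i ∈ s, c) μ :=
    sum_of_iIndepFun (hindep.comp (fun _ x ↦ x - a) fun _ ↦ measurable_sub_const a)
      fun i _ ↦ hsub i
  have hevent : {ω | t ≤ |(∑ i ∈ s, X i ω) / #s - a|}
      = {ω | #s * t ≤ |∑ i ∈ s, (X i ω - a)|} := by
    ext ω
    rw [Set.mem_ofPred_eq, Set.mem_ofPred_eq, sum_sub_distrib, sum_const, nsmul_eq_mul,
      ← le_div_iff₀' hcard, ← abs_of_pos hcard, ← abs_div, abs_of_pos hcard, sub_div,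
      mul_div_cancel_left₀ _ hcard.ne']
  have hexp : -(#s * t) ^ 2 / (2 * ((∑ _i ∈ s, c : ℝ≥0) : ℝ)) = -#s * t ^ 2 / (2 * c) := by
    rw [NNReal.coe_sum, sum_const, nsmul_eq_mul]
    rcases eq_or_ne (c : ℝ) 0 with hc | hc
    · simp [hc]
    · field_simp
  rw [hevent, ← hexp]
  exact hsum.measureReal_abs_ge_le (by positivity)

end ProbabilityTheory.HasSubgaussianMGF

lemma exp_neg_mul_attackBeta_sq_le {σ δ : ℝ} {K n : ℕ} (hσ : σ ≠ 0) (hK : K ≠ 0) (hδ : 0 < δ)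
    (hn : n ≠ 0) :
    exp (-n * attackBeta σ K δ n ^ 2 / (2 * σ ^ 2)) ≤ 3 * δ / (π ^ 2 * K * n ^ 2) := by
  set A := π ^ 2 * K * n ^ 2 / (3 * δ)
  have hA : 0 < A := by positivity
  have hβ : 2 * σ ^ 2 / n * log A ≤ attackBeta σ K δ n ^ 2 := by
    rw [attackBeta, sq_sqrt']
    exact le_max_left _ _
  have hβn : 2 * σ ^ 2 * log A ≤ n * attackBeta σ K δ n ^ 2 :=
    calc 2 * σ ^ 2 * log A = n * (2 * σ ^ 2 / n * log A) := by field_simp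
      _ ≤ n * attackBeta σ K δ n ^ 2 := by gcongr
  calc exp (-n * attackBeta σ K δ n ^ 2 / (2 * σ ^ 2)) ≤ exp (-log A) := by
        gcongr
        rw [div_le_iff₀ (by positivity)]
        linarith
    _ = 3 * δ / (π ^ 2 * K * n ^ 2) := by rw [exp_neg, exp_log hA, inv_div]

lemma measure_iUnion_le_ofReal_of_hasSum {α ι : Type*} [Countable ι] {m : MeasurableSpace α}
    {μ : Measure α} {s : ι → Set α} {f : ι → ℝ} {a : ℝ} (hf : HasSum f a) (hf0 : ∀ i, 0 ≤ f i)
    (hs : ∀ i, μ (s i) ≤ ENNReal.ofReal (f i)) : μ (⋃ i, s i) ≤ ENNReal.ofReal a :=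
  calc μ (⋃ i, s i) ≤ ∑' i, μ (s i) := measure_iUnion_le s
    _ ≤ ∑' i, ENNReal.ofReal (f i) := ENNReal.tsum_le_tsum hs
    _ = ENNReal.ofReal a := by rw [← ENNReal.ofReal_tsum_of_nonneg hf0 hf.summable, hf.tsum_eq]

lemma measure_attackBeta_le_abs_mean_sub_le {Ω : Type*} [MeasureSpace Ω]
    [IsFiniteMeasure (ℙ : Measure Ω)] {σ δ a : ℝ} {K n : ℕ} {X : ℕ → Ω → ℝ}
    (hindep : iIndepFun X ℙ)
    (hsub : ∀ j, HasSubgaussianMGF (fun ω ↦ X j ω - a) ⟨σ ^ 2, sq_nonneg σ⟩ ℙ)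
    (hσ : σ ≠ 0) (hK : K ≠ 0) (hδ : 0 < δ) (hn : n ≠ 0) :
    ℙ {ω | attackBeta σ K δ n ≤ |(∑ j ∈ Icc 1 n, X j ω) / n - a|}
      ≤ ENNReal.ofReal (6 * δ / (π ^ 2 * K) * (1 / (n : ℝ) ^ 2)) := by
  have hoeffding := HasSubgaussianMGF.measureReal_abs_mean_sub_ge_le hindep hsub
    (nonempty_Icc.2 (Nat.one_le_iff_ne_zero.2 hn)) (sqrt_nonneg _ : 0 ≤ attackBeta σ K δ n)
  rw [Nat.card_Icc, Nat.add_sub_cancel] at hoeffding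
  calc ℙ {ω | attackBeta σ K δ n ≤ |(∑ j ∈ Icc 1 n, X j ω) / n - a|}
      = ENNReal.ofReal
          ((ℙ : Measure Ω).real {ω | attackBeta σ K δ n ≤ |(∑ j ∈ Icc 1 n, X j ω) / n - a|}) :=
        (ofReal_measureReal).symm
    _ ≤ ENNReal.ofReal (2 * (3 * δ / (π ^ 2 * K * n ^ 2))) := by
        gcongr
        exact hoeffding.trans (by gcongr; exact exp_neg_mul_attackBeta_sq_le hσ hK hδ hn)
    _ = ENNReal.ofReal (6 * δ / (π ^ 2 * K) * (1 / (n : ℝ) ^ 2)) := by ring_nf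

theorem subgaussian_uniform_concentration_general
    {Ω : Type*} [MeasureSpace Ω] [IsProbabilityMeasure (ℙ : Measure Ω)]
    (σ : ℝ) (K : ℕ) (δ : ℝ) (hσ : 0 < σ) (hK : 1 ≤ K) (hδ : 0 < δ)
    (μ : ℝ) (X : ℕ → Ω → ℝ)
    (hindep : iIndepFun X ℙ)
    (hint : ∀ j (s : ℝ), Integrable (fun ω => Real.exp (s * (X j ω - μ))) ℙ)
    (hsub : ∀ j (s : ℝ), ∫ ω, Real.exp (s * (X j ω - μ)) ≤ Real.exp (s ^ 2 * σ ^ 2 / 2)) :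
    ℙ {ω | ∃ n : ℕ, 1 ≤ n ∧
        attackBeta σ K δ n ≤ |(∑ j ∈ Finset.Icc 1 n, X j ω) / n - μ|} ≤
      ENNReal.ofReal (δ / K) := by
  have hsubG (j : ℕ) : HasSubgaussianMGF (fun ω ↦ X j ω - μ) ⟨σ ^ 2, sq_nonneg σ⟩ ℙ :=
    ⟨hint j, fun s ↦ (hsub j s).trans_eq (by rw [mul_comm (s ^ 2)]; rfl)⟩
  have hterm (n : ℕ) : ℙ {ω | 1 ≤ n ∧ attackBeta σ K δ n ≤ |(∑ j ∈ Icc 1 n, X j ω) / n - μ|}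
      ≤ ENNReal.ofReal (6 * δ / (π ^ 2 * K) * (1 / (n : ℝ) ^ 2)) := by
    rcases eq_or_ne n 0 with rfl | hn
    · simp
    simpa only [Nat.one_le_iff_ne_zero.2 hn, true_and] using
      measure_attackBeta_le_abs_mean_sub_le hindep hsubG hσ.ne' (Nat.one_le_iff_ne_zero.1 hK) hδ hn
  have hsum : HasSum (fun n : ℕ ↦ 6 * δ / (π ^ 2 * K) * (1 / (n : ℝ) ^ 2)) (δ / K) := by
    have hK0 : (K : ℝ) ≠ 0 := by positivity
    have hπ := pi_pos
    have h := hasSum_zeta_two.mul_left (6 * δ / (π ^ 2 * K))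
    rwa [show 6 * δ / (π ^ 2 * K) * (π ^ 2 / 6) = δ / K by field_simp] at h
  rw [Set.ofPred_exists]
  exact measure_iUnion_le_ofReal_of_hasSum hsum (fun n ↦ by positivity) hterm

/-- For an i.i.d. sequence of `σ²`-sub-Gaussian random variables, the probability
that there exists some `n ≥ 1` at which the empirical mean of the first `n`
variables deviates from `μ` by at least `β(n)` is at most `δ/K`. -/
theorem subgaussian_uniform_concentration
    {Ω : Type*} [MeasureSpace Ω] [IsProbabilityMeasure (ℙ : Measure Ω)]
    (σ : ℝ) (K : ℕ) (δ : ℝ) (hσ : 0 < σ) (hK : 1 ≤ K) (hδ : 0 < δ) (hδ' : δ ≤ 1 / 2)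
    (μ : ℝ) (X : ℕ → Ω → ℝ)
    (hmeas : ∀ j, Measurable (X j))
    (hindep : iIndepFun X ℙ)
    (hident : ∀ j, IdentDistrib (X j) (X 1) ℙ ℙ)
    (hint : ∀ j (s : ℝ), Integrable (fun ω => Real.exp (s * (X j ω - μ))) ℙ)
    (hsub : ∀ j (s : ℝ), ∫ ω, Real.exp (s * (X j ω - μ)) ≤ Real.exp (s ^ 2 * σ ^ 2 / 2)) :
    ℙ {ω | ∃ n : ℕ, 1 ≤ n ∧
        attackBeta σ K δ n ≤ |(∑ j ∈ Finset.Icc 1 n, X j ω) / n - μ|} ≤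
      ENNReal.ofReal (δ / K) :=
  subgaussian_uniform_concentration_general σ K δ hσ hK hδ μ X hindep hint hsub
end

section
/- (Core implication of Theorem 2) Let σ > 0 and μ₁ > μ₂ be real numbers with Δ = μ₁ − μ₂. Let N ≥ 1 and t be integers with t − N − 1 ≥ N, and let α₁, α₂ ≥ 0 be real numbers. Suppose: (i) μ₂ + α₂/(t − N − 1) + β(t − N − 1) + 3σ·sqrt(log t/(t − N − 1)) > μ₁ − α₁/N − β(N) + 3σ·sqrt(log t/N); (ii) β(t − N − 1) + 3σ·sqrt(log t/(t − N − 1)) ≤ 0.01·β(N) + 0.01·σ·sqrt(log t/N); (iii) 1.01·β(N) ≤ 2.49·σ·sqrt(log t/N). Then α₁ + α₂ > N·Δ + 0.5·σ·sqrt(N·log t) ≥ Δ + 0.5·σ·sqrt(log t). -/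
open Real

/-- Core implication of Theorem 2 (lower bound for attacks on UCB): from the UCB
index comparison at the last round `t` where arm 1 is pulled (combined with the
concentration event), the total attack cost exceeds
`N·Δ + 0.5σ·sqrt(N·log t) ≥ Δ + 0.5σ·sqrt(log t)`. -/
theorem ucb_attack_lower_bound_core
    (σ δ : ℝ) (K : ℕ) (hσ : 0 < σ) (hK : 1 ≤ K) (hδ : 0 < δ) (hδ' : δ ≤ 1 / 2)
    (μ₁ μ₂ Δ : ℝ) (hμ : μ₂ < μ₁) (hΔ : Δ = μ₁ - μ₂)
    (N t : ℕ) (hN : 1 ≤ N) (ht : N ≤ t - N - 1)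
    (α₁ α₂ : ℝ) (hα₁ : 0 ≤ α₁) (hα₂ : 0 ≤ α₂)
    (h1 : μ₁ - α₁ / N - attackBeta σ K δ N + 3 * σ * Real.sqrt (Real.log t / N) <
      μ₂ + α₂ / ((t - N - 1 : ℕ) : ℝ) + attackBeta σ K δ (t - N - 1) +
        3 * σ * Real.sqrt (Real.log t / ((t - N - 1 : ℕ) : ℝ)))
    (h2 : attackBeta σ K δ (t - N - 1) +
        3 * σ * Real.sqrt (Real.log t / ((t - N - 1 : ℕ) : ℝ)) ≤
      0.01 * attackBeta σ K δ N + 0.01 * σ * Real.sqrt (Real.log t / N))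
    (h3 : 1.01 * attackBeta σ K δ N ≤ 2.49 * σ * Real.sqrt (Real.log t / N)) :
    N * Δ + 0.5 * σ * Real.sqrt (N * Real.log t) < α₁ + α₂ ∧
    Δ + 0.5 * σ * Real.sqrt (Real.log t) ≤ N * Δ + 0.5 * σ * Real.sqrt (N * Real.log t) := by

  have hNpos : (0:ℝ) < N := by exact_mod_cast hN
  have hN1 : (1:ℝ) ≤ N := by exact_mod_cast hN
  have hm1 : 1 ≤ t - N - 1 := le_trans hN ht
  have hmN : (N:ℝ) ≤ ((t - N - 1 : ℕ) : ℝ) := by exact_mod_cast ht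
  have hmpos : (0:ℝ) < ((t - N - 1 : ℕ) : ℝ) := lt_of_lt_of_le hNpos hmN
  have ht3 : 3 ≤ t := by omega
  have hlog : 0 ≤ Real.log t := by
    apply Real.log_nonneg
    have : (3:ℝ) ≤ t := by exact_mod_cast ht3
    linarith
  set s := Real.sqrt (Real.log t / N) with hs
  have hsnn : 0 ≤ s := Real.sqrt_nonneg _
  have ha2 : α₂ / ((t - N - 1 : ℕ) : ℝ) ≤ α₂ / N := by
    gcongr
  have hdiv : Δ + 0.5 * σ * s < α₁ / N + α₂ / N := by
    have := h1
    nlinarith [h2, h3]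
  have hdiv' : Δ + 0.5 * σ * s < (α₁ + α₂) / N := by
    rw [add_div]; exact hdiv
  have hsq : Real.sqrt ((N:ℝ) * Real.log t) = (N:ℝ) * s := by
    have h1' : (N:ℝ) * Real.log t = (N:ℝ)^2 * (Real.log t / N) := by
      field_simp
    rw [h1', Real.sqrt_mul (sq_nonneg _), Real.sqrt_sq hNpos.le]
  have hmain : (N:ℝ) * Δ + 0.5 * σ * Real.sqrt ((N:ℝ) * Real.log t) < α₁ + α₂ := by
    rw [hsq]
    calc (N:ℝ) * Δ + 0.5 * σ * ((N:ℝ) * s) = (Δ + 0.5 * σ * s) * N := by ring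
    _ < α₁ + α₂ := (lt_div_iff₀ hNpos).mp hdiv'
  constructor
  · exact_mod_cast hmain
  · have hΔpos : 0 < Δ := by rw [hΔ]; linarith
    have hsqle : Real.sqrt (Real.log t) ≤ Real.sqrt ((N:ℝ) * Real.log t) := by
      apply Real.sqrt_le_sqrt
      nlinarith
    nlinarith [hsqle]
end

section
/- (Lemma 2, deterministic form) Consider the UCB-with-attack process with θ = 1.1. Assume event E holds, i.e., for every arm i and round t with N_i(t) ≥ 1, |μ̂⁰_i(t) − μ_i| < β(N_i(t)). Then for every round t > K and every non-target arm i ≠ K, N_i(t) ≤ ⌈log_θ(sqrt(log t))⌉. -/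
/-! After every pull of a non-target arm `i` the attack leaves its mean at least
`2β + 3σθ^{N_i}` below the target's. On `E` the target's mean drifts by less than `2β` until `i`
is pulled again (β being antitone), so at that next pull `s` the UCB rule forces
`θ^{N_i(s-1)} < √(log s / N_i(s-1)) ≤ √(log t)`; taking `log_θ` gives the bound. -/

open Real Finset

lemma log_mul_sq_div_antitoneOn {C : ℝ} (hC : exp 2 ≤ C) :
    AntitoneOn (fun x : ℝ ↦ log (C * x ^ 2) / x) (Set.Ici 1) := by
  have hC0 : 0 < C := (exp_pos 2).trans_le hC
  have hc : exp 1 ≤ √C := by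
    rw [le_sqrt (exp_pos 1).le hC0.le, ← exp_nat_mul]; simpa using hC
  have hscale (x : ℝ) (hx : 0 < x) :
      log (C * x ^ 2) / x = 2 * √C * (log (√C * x) / (√C * x)) := by
    rw [show C * x ^ 2 = (√C * x) ^ 2 by rw [mul_pow, sq_sqrt hC0.le], log_pow]
    field_simp
    push_cast; ring
  intro x (hx : 1 ≤ x) y (hy : 1 ≤ y) hxy
  simp only [hscale x (by linarith), hscale y (by linarith)]
  refine mul_le_mul_of_nonneg_left (log_div_self_antitoneOn ?_ ?_ ?_) (by positivity)
  · exact hc.trans (le_mul_of_one_le_right (sqrt_nonneg C) hx)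
  · exact hc.trans (le_mul_of_one_le_right (sqrt_nonneg C) hy)
  · gcongr

lemma attackBeta_antitone {σ δ : ℝ} {K : ℕ} (hK : 2 ≤ K) (hδ : 0 < δ)
    (hδ' : δ ≤ 1 / 2) {m n : ℕ} (hm : 1 ≤ m) (hmn : m ≤ n) :
    attackBeta σ K δ n ≤ attackBeta σ K δ m := by
  set C := π ^ 2 * K / (3 * δ)
  have hC : exp 2 ≤ C := by
    have hK' : (2 : ℝ) ≤ K := by exact_mod_cast hK
    have he : exp 2 < 9 := by
      rw [show (2 : ℝ) = 1 + 1 by norm_num, exp_add]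
      nlinarith [exp_one_lt_d9, exp_pos 1]
    have hπ : 9 < π ^ 2 := by nlinarith [pi_gt_three]
    rw [le_div_iff₀ (by positivity)]
    nlinarith
  have hmono := log_mul_sq_div_antitoneOn hC (Set.mem_Ici.2 (Nat.one_le_cast.2 hm))
    (Set.mem_Ici.2 (Nat.one_le_cast.2 (hm.trans hmn))) (Nat.cast_le.2 hmn)
  unfold attackBeta
  apply sqrt_le_sqrt
  have hrw (k : ℕ) : 2 * σ ^ 2 / k * log (π ^ 2 * K * k ^ 2 / (3 * δ))
      = 2 * σ ^ 2 * (log (C * k ^ 2) / k) := by simp only [C]; ring_nf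
  rw [hrw, hrw]
  exact mul_le_mul_of_nonneg_left hmono (by positivity)

section Visits

variable {α : Type*} [DecidableEq α]

def visits (I : ℕ → α) (i : α) (t : ℕ) : Finset ℕ := {s ∈ Icc 1 t | I s = i}

variable {I : ℕ → α} {i : α}

@[simp]
lemma mem_visits {s t : ℕ} : s ∈ visits I i t ↔ (1 ≤ s ∧ s ≤ t) ∧ I s = i := by
  simp [visits]

lemma visits_mono : Monotone (visits I i) := fun _ _ h ↦
  filter_subset_filter _ (Icc_subset_Icc_right h)

lemma card_visits_of_eq {s : ℕ} (hs : 1 ≤ s) (h : I s = i) :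
    #(visits I i s) = #(visits I i (s - 1)) + 1 := by
  have : visits I i s = insert s (visits I i (s - 1)) := by
    ext x; simp only [mem_visits, mem_insert]; constructor
    · rintro ⟨⟨h1, h2⟩, h3⟩
      rcases h2.eq_or_lt with rfl | hlt
      exacts [Or.inl rfl, Or.inr ⟨⟨h1, by omega⟩, h3⟩]
    · rintro (rfl | ⟨⟨h1, h2⟩, h3⟩)
      exacts [⟨⟨hs, le_rfl⟩, h⟩, ⟨⟨h1, by omega⟩, h3⟩]
  rw [this, card_insert_of_notMem (by simp; omega)]

lemma exists_last_visit {t : ℕ} (h : (visits I i t).Nonempty) :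
    ∃ s ∈ visits I i t, visits I i s = visits I i t := by
  refine ⟨_, max'_mem _ h, (visits_mono (mem_visits.1 (max'_mem _ h)).1.2).antisymm ?_⟩
  intro x hx
  exact mem_visits.2 ⟨⟨(mem_visits.1 hx).1.1, le_max' _ x hx⟩, (mem_visits.1 hx).2⟩

end Visits

lemma natCast_add_one_le_ceil_logb {b x : ℝ} {n : ℕ} (hb : 1 < b) (h : b ^ n < x) :
    (n + 1 : ℤ) ≤ ⌈logb b x⌉ := by
  rw [Int.add_one_le_iff, Int.lt_ceil, Int.cast_natCast,
    lt_logb_iff_rpow_lt hb ((pow_pos (by linarith) n).trans h), rpow_natCast]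
  exact h

lemma lt_sub_of_le_sub_two_mul {x a b m β₁ β₂ c : ℝ} (hx : x ≤ a - 2 * β₁ - c)
    (ha : |a - m| < β₁) (hb : |b - m| < β₂) (hβ : β₂ ≤ β₁) : x < b - c := by
  rw [abs_lt] at ha hb
  linarith

lemma lt_sqrt_of_index_le {σ L a b m n w : ℝ} (hσ : 0 < σ) (hL : 0 ≤ L) (hn : 1 ≤ n)
    (hindex : b + 3 * σ * √(L / m) ≤ a + 3 * σ * √(L / n)) (hgap : a < b - 3 * σ * w) :
    w < √L := by
  have hbonus : √(L / n) ≤ √L := sqrt_le_sqrt (div_le_self hL hn)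
  nlinarith [sqrt_nonneg (L / m)]

section AttackedUCB

variable {K : ℕ} {σ δ : ℝ} {μ : Fin K → ℝ} {r : Fin K → ℕ → ℝ} {tgt : Fin K}
  {I : ℕ → Fin K} {N : Fin K → ℕ → ℕ} {hatμ0 hatμ : Fin K → ℕ → ℝ} {α : ℕ → ℝ}

lemma target_mean_concentrates (hN : ∀ j u, N j u = #(visits I j u)) (hI1 : I 1 = tgt)
    (hμ0 : ∀ j u, 1 ≤ N j u → hatμ0 j u = (∑ x ∈ Icc 1 (N j u), r j x) / N j u)
    (hμ : ∀ j u, 1 ≤ N j u →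
      hatμ j u = ((∑ x ∈ Icc 1 (N j u), r j x) - ∑ s ∈ visits I j u, α s) / N j u)
    (hαtgt : ∀ u, I u = tgt → α u = 0)
    (hE : ∀ j u, 1 ≤ N j u → |hatμ0 j u - μ j| < attackBeta σ K δ (N j u))
    {u : ℕ} (hu : 1 ≤ u) :
    1 ≤ N tgt u ∧ |hatμ tgt u - μ tgt| < attackBeta σ K δ (N tgt u) := by
  have hpos : 1 ≤ N tgt u := by
    rw [hN]
    exact card_pos.2 ⟨1, by simp [hI1, hu]⟩
  refine ⟨hpos, ?_⟩
  rw [hμ tgt u hpos, sum_eq_zero fun x hx ↦ hαtgt x (mem_visits.1 hx).2, sub_zero,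
    ← hμ0 tgt u hpos]
  exact hE tgt u hpos

lemma pow_lt_sqrt_log_of_pull (hσ : 0 < σ) (hK : 2 ≤ K) (hδ : 0 < δ) (hδ' : δ ≤ 1 / 2)
    (hN : ∀ j u, N j u = #(visits I j u))
    (hμ : ∀ j u, 1 ≤ N j u →
      hatμ j u = ((∑ x ∈ Icc 1 (N j u), r j x) - ∑ s ∈ visits I j u, α s) / N j u)
    (hUCB : ∀ t, K < t → ∀ i : Fin K,
      hatμ i (t - 1) + 3 * σ * √(log t / N i (t - 1))
        ≤ hatμ (I t) (t - 1) + 3 * σ * √(log t / N (I t) (t - 1)))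
    (hattack : ∀ t, 1 ≤ t → I t ≠ tgt →
      hatμ (I t) t ≤ hatμ tgt t - 2 * attackBeta σ K δ (N tgt t)
        - 3 * σ * (1.1 : ℝ) ^ N (I t) t)
    (htgt : ∀ u, 1 ≤ u →
      1 ≤ N tgt u ∧ |hatμ tgt u - μ tgt| < attackBeta σ K δ (N tgt u))
    {i : Fin K} (hi : i ≠ tgt) {s : ℕ} (hsK : K < s) (hIs : I s = i) (hn : 1 ≤ N i (s - 1)) :
    (1.1 : ℝ) ^ N i (s - 1) < √(log s) := by
  -- `p` is the previous pull of `i`; the attack made there still governs `hatμ i (s - 1)`.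
  obtain ⟨p, hp, hvp⟩ := exists_last_visit (card_pos.1 (by rwa [← hN]))
  obtain ⟨⟨hp1, hps⟩, hIp⟩ := mem_visits.1 hp
  have hNp : N i p = N i (s - 1) := by rw [hN, hN, hvp]
  have hμp : hatμ i p = hatμ i (s - 1) := by
    rw [hμ i p (hNp ▸ hn), hμ i (s - 1) hn, hvp, hNp]
  have hattack_p := hattack p hp1 (hIp ▸ hi)
  rw [hIp, hNp, hμp] at hattack_p
  have hNtgt : N tgt p ≤ N tgt (s - 1) := by
    rw [hN, hN]
    exact card_le_card (visits_mono hps)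
  have hgap := lt_sub_of_le_sub_two_mul hattack_p (htgt p hp1).2 (htgt (s - 1) (by omega)).2
    (attackBeta_antitone hK hδ hδ' (htgt p hp1).1 hNtgt)
  have hindex := hUCB s hsK tgt
  rw [hIs] at hindex
  exact lt_sqrt_of_index_le hσ (log_nonneg (by exact_mod_cast (by omega : 1 ≤ s)))
    (by exact_mod_cast hn) hindex hgap

end AttackedUCB

theorem nontarget_pulls_le_general (σ δ : ℝ) (K : ℕ) (hσ : 0 < σ)
    (hδ : 0 < δ) (hδ' : δ ≤ 1 / 2)
    (μ : Fin K → ℝ) (r : Fin K → ℕ → ℝ) (tgt : Fin K)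
    (I : ℕ → Fin K) (N : Fin K → ℕ → ℕ)
    (hatμ0 hatμ : Fin K → ℕ → ℝ) (α : ℕ → ℝ)
    -- pull counts
    (hN : ∀ i t, N i t = ((Finset.Icc 1 t).filter (fun s => I s = i)).card)
    -- initialization: arm `tgt` is pulled in round 1, each arm once in rounds 1..K
    (hI1 : I 1 = tgt)
    (hinit : ∀ i, N i K = 1)
    -- pre-attack empirical means
    (hμ0 : ∀ i t, 1 ≤ N i t →
      hatμ0 i t = (∑ j ∈ Finset.Icc 1 (N i t), r i j) / (N i t))
    -- post-attack empirical means
    (hμ : ∀ i t, 1 ≤ N i t →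
      hatμ i t = ((∑ j ∈ Finset.Icc 1 (N i t), r i j)
        - ∑ s ∈ (Finset.Icc 1 t).filter (fun s => I s = i), α s) / (N i t))
    -- UCB arm selection after the initialization rounds
    (hUCB : ∀ t, K < t → ∀ i : Fin K,
      hatμ i (t - 1) + 3 * σ * Real.sqrt (Real.log t / N i (t - 1))
        ≤ hatμ (I t) (t - 1) + 3 * σ * Real.sqrt (Real.log t / N (I t) (t - 1)))
    -- pulls of the target arm are never attacked
    (hαtgt : ∀ t, I t = tgt → α t = 0)
    -- attack rule: after any pull of a non-target arm, the smallest (in absolute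
    -- value) nonnegative attack ensuring the post-attack mean drops below
    -- `hatμ tgt t − 2β(N_tgt(t)) − 3σθ^{N_i(t)}`
    (hatk : ∀ t, 1 ≤ t → I t ≠ tgt →
      0 ≤ α t ∧
      hatμ (I t) t ≤ hatμ tgt t - 2 * attackBeta σ K δ (N tgt t)
        - 3 * σ * (1.1 : ℝ) ^ (N (I t) t) ∧
      (α t ≠ 0 → hatμ (I t) t = hatμ tgt t - 2 * attackBeta σ K δ (N tgt t)
        - 3 * σ * (1.1 : ℝ) ^ (N (I t) t)))
    -- event E
    (hE : ∀ i t, 1 ≤ N i t → |hatμ0 i t - μ i| < attackBeta σ K δ (N i t)) :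
    ∀ t, K < t → ∀ i : Fin K, i ≠ tgt →
      (N i t : ℤ) ≤ ⌈Real.logb 1.1 (Real.sqrt (Real.log t))⌉ := by
  intro t ht i hi
  have hN' : ∀ j u, N j u = #(visits I j u) := hN
  have hK : 1 < K := by simpa using Fintype.one_lt_card_iff.2 ⟨i, tgt, hi⟩
  suffices ∃ n : ℕ, N i t ≤ n + 1 ∧ (1.1 : ℝ) ^ n < √(log t) by
    obtain ⟨n, hle, hlt⟩ := this
    exact (Int.ofNat_le.2 hle).trans (natCast_add_one_le_ceil_logb (by norm_num) hlt)
  rcases le_or_gt (N i t) 1 with hsmall | hbig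
  · refine ⟨0, hsmall, ?_⟩
    have ht3 : (3 : ℝ) ≤ t := by exact_mod_cast (by omega : 3 ≤ t)
    rw [pow_zero, lt_sqrt zero_le_one, one_pow, lt_log_iff_exp_lt (by positivity)]
    linarith [exp_one_lt_d9]
  obtain ⟨s, hs, hvs⟩ := exists_last_visit (card_pos.1 (hN' i t ▸ zero_lt_one.trans hbig))
  obtain ⟨⟨hs1, hst⟩, hIs⟩ := mem_visits.1 hs
  have hNt : N i t = N i (s - 1) + 1 := by rw [hN', ← hvs, card_visits_of_eq hs1 hIs, hN']
  have hsK : K < s := by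
    by_contra! hsK
    have := card_le_card (visits_mono hsK : visits I i s ⊆ visits I i K)
    rw [hvs, ← hN', ← hN', hinit] at this
    omega
  have hpow := pow_lt_sqrt_log_of_pull hσ hK hδ hδ' hN' hμ hUCB
    (fun u hu h ↦ (hatk u hu h).2.1)
    (fun u hu ↦ target_mean_concentrates hN' hI1 hμ0 hμ hαtgt hE hu) hi hsK hIs (by omega)
  refine ⟨_, hNt.le, hpow.trans_le (sqrt_le_sqrt (log_le_log ?_ ?_))⟩
  · exact_mod_cast (by omega : 0 < s)
  · exact_mod_cast hst

/-- Lemma 2 (deterministic form). For the UCB-with-attack process with `θ = 1.1`,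
on the event `E` (all pre-attack empirical means concentrate within `β` of the
true means), every non-target arm is pulled at most `⌈log_θ √(log t)⌉` times in
the first `t` rounds, for every `t > K`.

Process data: `r i n` is the pre-attack reward of the `n`-th pull of arm `i`,
`tgt` the target arm, `I t` the arm pulled in round `t`, `N i t` the number of
pulls of arm `i` in rounds `1..t`, `hatμ0 i t` / `hatμ i t` the pre- and post-attack
empirical means of arm `i` after `t` rounds, and `α t` the attack in round `t`. -/
theorem nontarget_pulls_le (σ δ : ℝ) (K : ℕ) (hσ : 0 < σ) (hK : 1 ≤ K)
    (hδ : 0 < δ) (hδ' : δ ≤ 1 / 2)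
    (μ : Fin K → ℝ) (r : Fin K → ℕ → ℝ) (tgt : Fin K)
    (I : ℕ → Fin K) (N : Fin K → ℕ → ℕ)
    (hatμ0 hatμ : Fin K → ℕ → ℝ) (α : ℕ → ℝ)
    -- pull counts
    (hN : ∀ i t, N i t = ((Finset.Icc 1 t).filter (fun s => I s = i)).card)
    -- initialization: arm `tgt` is pulled in round 1, each arm once in rounds 1..K
    (hI1 : I 1 = tgt)
    (hinit : ∀ i, N i K = 1)
    -- pre-attack empirical means
    (hμ0 : ∀ i t, 1 ≤ N i t →
      hatμ0 i t = (∑ j ∈ Finset.Icc 1 (N i t), r i j) / (N i t))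
    -- post-attack empirical means
    (hμ : ∀ i t, 1 ≤ N i t →
      hatμ i t = ((∑ j ∈ Finset.Icc 1 (N i t), r i j)
        - ∑ s ∈ (Finset.Icc 1 t).filter (fun s => I s = i), α s) / (N i t))
    -- UCB arm selection after the initialization rounds
    (hUCB : ∀ t, K < t → ∀ i : Fin K,
      hatμ i (t - 1) + 3 * σ * Real.sqrt (Real.log t / N i (t - 1))
        ≤ hatμ (I t) (t - 1) + 3 * σ * Real.sqrt (Real.log t / N (I t) (t - 1)))
    -- pulls of the target arm are never attacked
    (hαtgt : ∀ t, I t = tgt → α t = 0)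
    -- attack rule: after any pull of a non-target arm, the smallest (in absolute
    -- value) nonnegative attack ensuring the post-attack mean drops below
    -- `hatμ tgt t − 2β(N_tgt(t)) − 3σθ^{N_i(t)}`
    (hatk : ∀ t, 1 ≤ t → I t ≠ tgt →
      0 ≤ α t ∧
      hatμ (I t) t ≤ hatμ tgt t - 2 * attackBeta σ K δ (N tgt t)
        - 3 * σ * (1.1 : ℝ) ^ (N (I t) t) ∧
      (α t ≠ 0 → hatμ (I t) t = hatμ tgt t - 2 * attackBeta σ K δ (N tgt t)
        - 3 * σ * (1.1 : ℝ) ^ (N (I t) t)))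
    -- event E
    (hE : ∀ i t, 1 ≤ N i t → |hatμ0 i t - μ i| < attackBeta σ K δ (N i t)) :
    ∀ t, K < t → ∀ i : Fin K, i ≠ tgt →
      (N i t : ℤ) ≤ ⌈Real.logb 1.1 (Real.sqrt (Real.log t))⌉ :=
  nontarget_pulls_le_general σ δ K hσ hδ hδ' μ r tgt I N hatμ0 hatμ α hN hI1 hinit hμ0 hμ hUCB hαtgt
    hatk hE
end

section
/- (Theorem 1, probabilistic form) For each arm i ∈ {1, …, K}, let (X_{i,n})_{n≥1} be an i.i.d. sequence of random variables on a common probability space such that each X_{i,n} − μ_i has sub-Gaussian moment generating function with variance proxy σ², and run the UCB-with-attack process with θ = 1.1 path-wise on the pre-attack reward streams r⁰_i(n) = X_{i,n}. Then with probability at least 1 − δ the following holds simultaneously for all rounds t > K: every non-target arm i ≠ K satisfies N_i(t) ≤ ⌈log_θ(sqrt(log t))⌉, and the cumulative attack cost Σ_{s ≤ t} |α_s| is at most Σ_{i ≠ K} N_i(t)·(max(0, μ_i − μ_K) + 4β(N_i(t)) + 3θσ·sqrt(log t)). -/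
/-!
Hoeffding's inequality for sub-Gaussian sums and a union bound over arms and sample sizes show
that, with probability at least `1 - δ`, every empirical mean of the first `n` rewards of an arm
lies within `β(n)` of its mean: `β` is chosen so that the failure probability for `n` samples is
`6δ / (π² K n²)`, and `∑ 1/n² = π²/6`.

On that event the argument is deterministic. The target arm is never attacked, so its empirical
mean stays within `β` of `μ_K`, while every pull of a non-target arm `i` leaves the post-attack
mean of `i` at least `3σθ^{N_i}` below the target's. UCB can therefore pull `i` only when its
exploration bonus beats that gap, which forces `θ^{N_i} < √(log t)` and `N_i < N_K`. Finally, the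
attacks on `i` add up, at the last round where one is nonzero, to `N_i` times the gap between
the pre- and post-attack means of `i`, and there the attack rule is binding, which bounds that
gap by `max 0 (μ_i - μ_K) + 4β(N_i) + 3σθ^{N_i}`.
-/

open Real Finset MeasureTheory ProbabilityTheory

lemma one_lt_sqrt_log {x : ℝ} (hx : 3 ≤ x) : 1 < √(log x) := by
  rw [lt_sqrt zero_le_one, one_pow, lt_log_iff_exp_lt (by linarith)]
  linarith [exp_one_lt_three]

lemma log_mul_sq_div_succ_le {c : ℝ} (hc : 4 ≤ c) {n : ℕ} (hn : 1 ≤ n) :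
    log (c * ((n + 1 : ℕ) : ℝ) ^ 2) / (n + 1 : ℕ) ≤ log (c * n ^ 2) / n := by
  have hn' : (1 : ℝ) ≤ n := by exact_mod_cast hn
  have hlog_succ : log (c * ((n + 1 : ℕ) : ℝ) ^ 2) = log (c * n ^ 2) + 2 * log ((n + 1) / n) := by
    have hsplit : c * ((n + 1 : ℕ) : ℝ) ^ 2 = c * n ^ 2 * ((n + 1) / n) ^ 2 := by
      push_cast; field_simp
    rw [hsplit, log_mul (by positivity) (by positivity), log_pow]
    push_cast; ring
  -- `n log (1 + 1/n) ≤ 1`, and `log (c n²) ≥ log 16 > 2` once `n ≥ 2`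
  have hgap : 2 * n * log ((n + 1) / n) ≤ log (c * n ^ 2) := by
    rcases hn.eq_or_lt with rfl | hn2
    · calc 2 * ((1 : ℕ) : ℝ) * log ((((1 : ℕ) : ℝ) + 1) / ((1 : ℕ) : ℝ)) = log (2 ^ 2) := by
            rw [log_pow]; norm_num
        _ ≤ log (c * ((1 : ℕ) : ℝ) ^ 2) := log_le_log (by norm_num) (by norm_num [hc])
    · have hn2' : (2 : ℝ) ≤ n := by exact_mod_cast hn2
      have h1 : 2 * n * log ((n + 1) / n) ≤ 2 := by
        have := log_le_sub_one_of_pos (show (0 : ℝ) < (n + 1) / n by positivity)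
        have hx : (n + 1 : ℝ) / n - 1 = 1 / n := by field_simp; ring
        calc 2 * n * log ((n + 1) / n) ≤ 2 * n * (1 / n) := by gcongr; linarith
          _ = 2 := by field_simp
      have h2 : 2 < log (c * n ^ 2) := by
        rw [lt_log_iff_exp_lt (by positivity)]
        calc exp 2 = exp 1 ^ 2 := by rw [← exp_nat_mul]; norm_num
          _ < 3 ^ 2 := by gcongr; exact exp_one_lt_three
          _ ≤ 4 * 2 ^ 2 := by norm_num
          _ ≤ c * n ^ 2 := by gcongr
      linarith
  rw [hlog_succ, div_le_div_iff₀ (by positivity) (by positivity)]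
  push_cast
  nlinarith

section attackBeta

variable {σ δ : ℝ} {K : ℕ}

lemma four_le_pi_sq_mul_div (hK : 1 ≤ K) (hδ : 0 < δ) (hδ' : δ ≤ 1 / 2) :
    4 ≤ π ^ 2 * K / (3 * δ) := by
  have hπ : 9 < π ^ 2 := by nlinarith [pi_gt_three]
  have hK' : (1 : ℝ) ≤ K := by exact_mod_cast hK
  rw [le_div_iff₀ (by positivity)]
  nlinarith

lemma attackBeta_eq (σ : ℝ) (K : ℕ) (δ : ℝ) (n : ℕ) :
    attackBeta σ K δ n = √(2 * σ ^ 2 * (log (π ^ 2 * K / (3 * δ) * n ^ 2) / n)) := by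
  rw [attackBeta, mul_div_right_comm (π ^ 2 * (K : ℝ)) ((n : ℝ) ^ 2)]
  congr 1
  ring

lemma natCast_mul_attackBeta (σ : ℝ) (K : ℕ) (δ : ℝ) {n : ℕ} (hn : 1 ≤ n) :
    n * attackBeta σ K δ n = √(2 * σ ^ 2 * (n * log (π ^ 2 * K / (3 * δ) * n ^ 2))) := by
  have hn' : (0 : ℝ) < n := by exact_mod_cast hn
  rw [attackBeta_eq]
  calc (n : ℝ) * √(2 * σ ^ 2 * (log (π ^ 2 * K / (3 * δ) * n ^ 2) / n))
      = √(n ^ 2 * (2 * σ ^ 2 * (log (π ^ 2 * K / (3 * δ) * n ^ 2) / n))) := by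
        rw [sqrt_mul (sq_nonneg _), sqrt_sq hn'.le]
    _ = _ := by congr 1; field_simp

lemma attackBeta_antitoneOn (hK : 1 ≤ K) (hδ : 0 < δ) (hδ' : δ ≤ 1 / 2) :
    AntitoneOn (attackBeta σ K δ) (Set.Ici 1) := by
  refine antitoneOn_nat_Ici_of_succ_le fun n hn => ?_
  rw [attackBeta_eq, attackBeta_eq]
  gcongr √(_ * ?_)
  exact log_mul_sq_div_succ_le (four_le_pi_sq_mul_div hK hδ hδ') hn

lemma natCast_mul_attackBeta_monotoneOn (hK : 1 ≤ K) (hδ : 0 < δ) (hδ' : δ ≤ 1 / 2) :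
    MonotoneOn (fun n : ℕ => n * attackBeta σ K δ n) (Set.Ici 1) := by
  intro m hm n hn hmn
  have hc := four_le_pi_sq_mul_div hK hδ hδ'
  have hm' : (1 : ℝ) ≤ m := by exact_mod_cast hm
  simp only [natCast_mul_attackBeta σ K δ hm, natCast_mul_attackBeta σ K δ hn]
  have hlog : 0 ≤ log (π ^ 2 * K / (3 * δ) * m ^ 2) := log_nonneg (by nlinarith)
  gcongr

lemma exp_neg_sq_natCast_mul_attackBeta (hσ : 0 < σ) (hK : 1 ≤ K) (hδ : 0 < δ) (hδ' : δ ≤ 1 / 2)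
    {n : ℕ} (hn : 1 ≤ n) :
    exp (-(n * attackBeta σ K δ n) ^ 2 / (2 * (n * σ ^ 2))) = (π ^ 2 * K / (3 * δ) * n ^ 2)⁻¹ := by
  have hc := four_le_pi_sq_mul_div hK hδ hδ'
  have hn' : (1 : ℝ) ≤ n := by exact_mod_cast hn
  have hlog : 0 ≤ log (π ^ 2 * K / (3 * δ) * n ^ 2) := log_nonneg (by nlinarith)
  have hσn : -(2 * σ ^ 2 * (n * log (π ^ 2 * K / (3 * δ) * n ^ 2))) / (2 * (n * σ ^ 2))
      = -log (π ^ 2 * K / (3 * δ) * n ^ 2) := by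
    field_simp
  rw [natCast_mul_attackBeta σ K δ hn, sq_sqrt (by positivity), hσn, exp_neg,
    exp_log (by positivity)]

end attackBeta

theorem ProbabilityTheory.HasSubgaussianMGF.measureReal_le_abs_le {Ω : Type*}
    [MeasurableSpace Ω] {μ : Measure Ω} [IsFiniteMeasure μ] {X : Ω → ℝ} {c : NNReal}
    (h : HasSubgaussianMGF X c μ) {ε : ℝ} (hε : 0 ≤ ε) :
    μ.real {ω | ε ≤ |X ω|} ≤ 2 * exp (-ε ^ 2 / (2 * c)) := by
  calc μ.real {ω | ε ≤ |X ω|} ≤ μ.real ({ω | ε ≤ X ω} ∪ {ω | ε ≤ (-X) ω}) := by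
        refine measureReal_mono fun ω hω => ?_
        simpa [le_abs] using hω
    _ ≤ _ := by
        linarith [measureReal_union_le (μ := μ) {ω | ε ≤ X ω} {ω | ε ≤ (-X) ω},
          h.measure_ge_le hε, h.neg.measure_ge_le hε]

lemma ProbabilityTheory.measureReal_le_abs_sum_le_of_iIndepFun {Ω ι : Type*} [MeasurableSpace Ω]
    {μ : Measure Ω} [IsProbabilityMeasure μ] {X : ι → Ω → ℝ} (h_indep : iIndepFun X μ)
    {c : NNReal} {s : Finset ι} (h_subG : ∀ i ∈ s, HasSubgaussianMGF (X i) c μ) {ε : ℝ}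
    (hε : 0 ≤ ε) :
    μ.real {ω | ε ≤ |∑ i ∈ s, X i ω|} ≤ 2 * exp (-ε ^ 2 / (2 * (#s * c))) := by
  simpa using (HasSubgaussianMGF.sum_of_iIndepFun h_indep h_subG).measureReal_le_abs_le hε

def IsConfidenceRadius {K : ℕ} (β : ℕ → ℝ) (μ : Fin K → ℝ) (x : Fin K → ℕ → ℝ) : Prop :=
  ∀ i n, 1 ≤ n → |(∑ j ∈ Icc 1 n, x i j) / n - μ i| ≤ β n

lemma measure_attackBeta_lt_abs_mean_sub_le {Ω : Type*} [MeasurableSpace Ω] {P : Measure Ω}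
    [IsProbabilityMeasure P] {σ δ m : ℝ} {K : ℕ} (hσ : 0 < σ) (hK : 1 ≤ K) (hδ : 0 < δ)
    (hδ' : δ ≤ 1 / 2) {Y : ℕ → Ω → ℝ} (hindep : iIndepFun Y P)
    (hsub : ∀ n, HasSubgaussianMGF (fun ω => Y n ω - m) ⟨σ ^ 2, sq_nonneg σ⟩ P) (n : ℕ) :
    P {ω | 1 ≤ n ∧ attackBeta σ K δ n < |(∑ j ∈ Icc 1 n, Y j ω) / n - m|}
      ≤ ENNReal.ofReal (2 * (π ^ 2 * K / (3 * δ) * n ^ 2)⁻¹) := by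
  rcases Nat.eq_zero_or_pos n with rfl | hn
  · simp
  have hn' : (0 : ℝ) < n := by exact_mod_cast hn
  have hcentred : iIndepFun (fun j ω => Y j ω - m) P :=
    hindep.comp (fun _ y => y - m) (fun _ => measurable_id.sub_const m)
  have hsubset : {ω | 1 ≤ n ∧ attackBeta σ K δ n < |(∑ j ∈ Icc 1 n, Y j ω) / n - m|}
      ⊆ {ω | n * attackBeta σ K δ n ≤ |∑ j ∈ Icc 1 n, (Y j ω - m)|} := by
    intro ω ⟨_, hω⟩
    have hsum : ∑ j ∈ Icc 1 n, (Y j ω - m) = n * ((∑ j ∈ Icc 1 n, Y j ω) / n - m) := by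
      rw [sum_sub_distrib, sum_const, Nat.card_Icc, Nat.add_sub_cancel, nsmul_eq_mul]
      field_simp
    rw [Set.mem_ofPred_eq, hsum, abs_mul, Nat.abs_cast]
    exact mul_le_mul_of_nonneg_left hω.le hn'.le
  have htail := measureReal_le_abs_sum_le_of_iIndepFun hcentred (s := Icc 1 n)
    (fun j _ => hsub j) (ε := n * attackBeta σ K δ n) (mul_nonneg hn'.le (sqrt_nonneg _))
  rw [Nat.card_Icc, Nat.add_sub_cancel] at htail
  change _ ≤ 2 * exp (-(n * attackBeta σ K δ n) ^ 2 / (2 * (n * σ ^ 2))) at htail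
  rw [exp_neg_sq_natCast_mul_attackBeta hσ hK hδ hδ' hn] at htail
  rw [← ofReal_measureReal]
  exact ENNReal.ofReal_le_ofReal ((measureReal_mono hsubset).trans htail)

theorem ofReal_one_sub_le_measure_isConfidenceRadius {Ω : Type*} [MeasurableSpace Ω]
    {P : Measure Ω} [IsProbabilityMeasure P] {σ δ : ℝ} {K : ℕ} (hσ : 0 < σ) (hK : 1 ≤ K)
    (hδ : 0 < δ) (hδ' : δ ≤ 1 / 2) (m : Fin K → ℝ) (X : Fin K → ℕ → Ω → ℝ)
    (hindep : ∀ i, iIndepFun (X i) P)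
    (hsub : ∀ i n, HasSubgaussianMGF (fun ω => X i n ω - m i) ⟨σ ^ 2, sq_nonneg σ⟩ P) :
    ENNReal.ofReal (1 - δ) ≤
      P {ω | IsConfidenceRadius (attackBeta σ K δ) m (fun i n => X i n ω)} := by
  set G := {ω | IsConfidenceRadius (attackBeta σ K δ) m (fun i n => X i n ω)}
  set c := π ^ 2 * K / (3 * δ) with hc_def
  have hc : 0 < c := by positivity
  have hK' : (0 : ℝ) < K := by exact_mod_cast hK
  -- the `n = 0` terms vanish on both sides: the event is empty and `(c * 0 ^ 2)⁻¹ = 0`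
  have hseries : HasSum (fun n : ℕ => 2 * (c * n ^ 2)⁻¹) (δ / K) := by
    have hsum : 2 / c * (π ^ 2 / 6) = δ / K := by rw [hc_def]; field_simp; norm_num
    have hterm : (fun n : ℕ => 2 * (c * n ^ 2)⁻¹) = fun n : ℕ => 2 / c * (1 / (n : ℝ) ^ 2) :=
      funext fun n => by ring
    rw [hterm, ← hsum]
    exact hasSum_zeta_two.mul_left (2 / c)
  have hGc : P Gᶜ ≤ ENNReal.ofReal δ := by
    have hcompl : Gᶜ = ⋃ i, ⋃ n,
        {ω | 1 ≤ n ∧ attackBeta σ K δ n < |(∑ j ∈ Icc 1 n, X i j ω) / n - m i|} := by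
      ext ω; simp [G, IsConfidenceRadius]
    calc P Gᶜ ≤ ∑ i, ∑' n,
          P {ω | 1 ≤ n ∧ attackBeta σ K δ n < |(∑ j ∈ Icc 1 n, X i j ω) / n - m i|} := by
          rw [hcompl]
          exact (measure_iUnion_fintype_le _ _).trans (by gcongr; exact measure_iUnion_le _)
      _ ≤ ∑ _i : Fin K, ∑' n : ℕ, ENNReal.ofReal (2 * (c * n ^ 2)⁻¹) := by
          gcongr with i n
          exact measure_attackBeta_lt_abs_mean_sub_le hσ hK hδ hδ' (hindep i) (hsub i) n
      _ = ENNReal.ofReal δ := by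
          rw [← ENNReal.ofReal_tsum_of_nonneg (fun n => by positivity) hseries.summable,
            hseries.tsum_eq, sum_const, card_univ, Fintype.card_fin, nsmul_eq_mul,
            ← ENNReal.ofReal_natCast, ← ENNReal.ofReal_mul hK'.le]
          congr 1
          field_simp
  calc ENNReal.ofReal (1 - δ) = 1 - ENNReal.ofReal δ := by
        rw [ENNReal.ofReal_sub _ hδ.le, ENNReal.ofReal_one]
    _ ≤ P G := by
        rw [tsub_le_iff_right, ← measure_univ (μ := P)]
        exact (measure_univ_le_add_compl G).trans (by gcongr)

structure IsAttackedUCBRun (σ θ : ℝ) (β : ℕ → ℝ) {K : ℕ} (x : Fin K → ℕ → ℝ) (tgt : Fin K)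
    (I : ℕ → Fin K) (N : Fin K → ℕ → ℕ) (hatμ0 hatμ : Fin K → ℕ → ℝ) (α : ℕ → ℝ) : Prop where
  pullCount_eq : ∀ i t, N i t = #{s ∈ Icc 1 t | I s = i}
  arm_one : I 1 = tgt
  pullCount_init : ∀ i, N i K = 1
  hatμ0_eq : ∀ i t, 1 ≤ N i t → hatμ0 i t = (∑ j ∈ Icc 1 (N i t), x i j) / N i t
  hatμ_eq : ∀ i t, 1 ≤ N i t →
    hatμ i t = ((∑ j ∈ Icc 1 (N i t), x i j) - ∑ s ∈ Icc 1 t with I s = i, α s) / N i t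
  ucb : ∀ t, K < t → ∀ i, hatμ i (t - 1) + 3 * σ * √(log t / N i (t - 1))
    ≤ hatμ (I t) (t - 1) + 3 * σ * √(log t / N (I t) (t - 1))
  attack_tgt : ∀ t, I t = tgt → α t = 0
  attack_nonneg : ∀ t, 1 ≤ t → I t ≠ tgt → 0 ≤ α t
  attack_le : ∀ t, 1 ≤ t → I t ≠ tgt →
    hatμ (I t) t ≤ hatμ tgt t - 2 * β (N tgt t) - 3 * σ * θ ^ N (I t) t
  attack_eq : ∀ t, 1 ≤ t → I t ≠ tgt → α t ≠ 0 →
    hatμ (I t) t = hatμ tgt t - 2 * β (N tgt t) - 3 * σ * θ ^ N (I t) t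

namespace IsAttackedUCBRun

variable {σ θ : ℝ} {β : ℕ → ℝ} {K : ℕ} {x : Fin K → ℕ → ℝ} {tgt i : Fin K} {I : ℕ → Fin K}
  {N : Fin K → ℕ → ℕ} {hatμ0 hatμ : Fin K → ℕ → ℝ} {α : ℕ → ℝ} {μ : Fin K → ℝ} {s t u : ℕ}

theorem pullCount_mono (h : IsAttackedUCBRun σ θ β x tgt I N hatμ0 hatμ α) (i : Fin K) :
    Monotone (N i) := by
  intro s u hsu
  rw [h.pullCount_eq, h.pullCount_eq]
  exact card_le_card (filter_subset_filter _ (Icc_subset_Icc_right hsu))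

theorem pullCount_succ (h : IsAttackedUCBRun σ θ β x tgt I N hatμ0 hatμ α) (i : Fin K) (u : ℕ) :
    N i (u + 1) = N i u + if I (u + 1) = i then 1 else 0 := by
  rw [h.pullCount_eq, h.pullCount_eq, card_filter, card_filter, sum_Icc_succ_top (by omega)]

theorem one_le_pullCount (h : IsAttackedUCBRun σ θ β x tgt I N hatμ0 hatμ α) (i : Fin K)
    (hu : K ≤ u) : 1 ≤ N i u :=
  h.pullCount_init i ▸ h.pullCount_mono i hu

theorem pullCount_le_one (h : IsAttackedUCBRun σ θ β x tgt I N hatμ0 hatμ α) (i : Fin K)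
    (hu : u ≤ K) : N i u ≤ 1 :=
  h.pullCount_init i ▸ h.pullCount_mono i hu

theorem one_le_pullCount_of_pull (h : IsAttackedUCBRun σ θ β x tgt I N hatμ0 hatμ α)
    (hs : 1 ≤ s) (hsu : s ≤ u) (hIs : I s = i) : 1 ≤ N i u := by
  rw [h.pullCount_eq, Nat.one_le_iff_ne_zero, Nat.ne_zero_iff_zero_lt, card_pos]
  exact ⟨s, mem_filter.mpr ⟨mem_Icc.mpr ⟨hs, hsu⟩, hIs⟩⟩

theorem one_le_pullCount_tgt (h : IsAttackedUCBRun σ θ β x tgt I N hatμ0 hatμ α) (hu : 1 ≤ u) :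
    1 ≤ N tgt u :=
  h.one_le_pullCount_of_pull le_rfl hu h.arm_one

theorem exists_last_pull (h : IsAttackedUCBRun σ θ β x tgt I N hatμ0 hatμ α) (hu : 1 ≤ N i u) :
    ∃ s, 1 ≤ s ∧ s ≤ u ∧ I s = i ∧ N i s = N i u ∧ hatμ i s = hatμ i u := by
  have hne : ({s ∈ Icc 1 u | I s = i} : Finset ℕ).Nonempty := by
    rw [← card_pos, ← h.pullCount_eq]; omega
  set s := ({s ∈ Icc 1 u | I s = i} : Finset ℕ).max' hne
  obtain ⟨hs, hIs⟩ := mem_filter.mp (max'_mem _ hne)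
  obtain ⟨hs1, hsu⟩ := mem_Icc.mp hs
  have hfilter : ({v ∈ Icc 1 s | I v = i} : Finset ℕ) = {v ∈ Icc 1 u | I v = i} := by
    ext v
    simp only [mem_filter, mem_Icc]
    constructor
    · rintro ⟨⟨hv1, hvs⟩, hIv⟩
      exact ⟨⟨hv1, hvs.trans hsu⟩, hIv⟩
    · rintro ⟨hv, hIv⟩
      exact ⟨⟨hv.1, le_max' _ v (mem_filter.mpr ⟨mem_Icc.mpr hv, hIv⟩)⟩, hIv⟩
  have hN : N i s = N i u := by rw [h.pullCount_eq, h.pullCount_eq, hfilter]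
  refine ⟨s, hs1, hsu, hIs, hN, ?_⟩
  rw [h.hatμ_eq i s (hN ▸ hu), h.hatμ_eq i u hu, hN, hfilter]

theorem abs_hatμ_tgt_sub_le (h : IsAttackedUCBRun σ θ β x tgt I N hatμ0 hatμ α)
    (hx : IsConfidenceRadius β μ x) (hu : 1 ≤ u) : |hatμ tgt u - μ tgt| ≤ β (N tgt u) := by
  have hn := h.one_le_pullCount_tgt hu
  have hunattacked : ∑ s ∈ Icc 1 u with I s = tgt, α s = 0 :=
    sum_eq_zero fun s hs => h.attack_tgt s (mem_filter.mp hs).2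
  rw [h.hatμ_eq tgt u hn, hunattacked, sub_zero]
  exact hx tgt _ hn

theorem hatμ_add_le_hatμ_tgt (h : IsAttackedUCBRun σ θ β x tgt I N hatμ0 hatμ α)
    (hx : IsConfidenceRadius β μ x) (hβ : AntitoneOn β (Set.Ici 1)) (hu : K ≤ u) (hi : i ≠ tgt) :
    hatμ i u + 3 * σ * θ ^ N i u ≤ hatμ tgt u := by
  -- the attack at the last pull `s` of `i` still holds, as `β (N tgt ·)` only decreases
  obtain ⟨s, hs1, hsu, hIs, hN, hμ⟩ := h.exists_last_pull (h.one_le_pullCount i hu)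
  have hattack := h.attack_le s hs1 (hIs ▸ hi)
  rw [hIs, hN, hμ] at hattack
  have hβs : β (N tgt u) ≤ β (N tgt s) := hβ (h.one_le_pullCount_tgt hs1)
    (h.one_le_pullCount_tgt (hs1.trans hsu)) (h.pullCount_mono tgt hsu)
  have hs := abs_le.mp (h.abs_hatμ_tgt_sub_le hx hs1)
  have hu := abs_le.mp (h.abs_hatμ_tgt_sub_le hx (hs1.trans hsu))
  linarith [hs.2, hu.1]

theorem pow_add_sqrt_le_sqrt (h : IsAttackedUCBRun σ θ β x tgt I N hatμ0 hatμ α)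
    (hx : IsConfidenceRadius β μ x) (hβ : AntitoneOn β (Set.Ici 1)) (hσ : 0 < σ) (hu : K < u)
    (hi : I u ≠ tgt) :
    θ ^ N (I u) (u - 1) + √(log u / N tgt (u - 1)) ≤ √(log u / N (I u) (u - 1)) := by
  have hucb := h.ucb u hu tgt
  have hkey := h.hatμ_add_le_hatμ_tgt hx hβ (show K ≤ u - 1 by omega) hi
  have h3σ : 3 * σ * (θ ^ N (I u) (u - 1) + √(log u / N tgt (u - 1)))
      ≤ 3 * σ * √(log u / N (I u) (u - 1)) := by linarith
  exact le_of_mul_le_mul_left h3σ (by positivity)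

theorem pow_pullCount_lt_sqrt_log (h : IsAttackedUCBRun σ θ β x tgt I N hatμ0 hatμ α)
    (hx : IsConfidenceRadius β μ x) (hβ : AntitoneOn β (Set.Ici 1)) (hσ : 0 < σ) (hu : K < u)
    (hi : I u ≠ tgt) : θ ^ N (I u) (u - 1) < √(log u) := by
  have hgap := h.pow_add_sqrt_le_sqrt hx hβ hσ hu hi
  have hn : (1 : ℝ) ≤ N (I u) (u - 1) := by exact_mod_cast h.one_le_pullCount _ (by omega)
  have hm : (0 : ℝ) < N tgt (u - 1) := by exact_mod_cast h.one_le_pullCount tgt (by omega)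
  have hlog : 0 < log u := log_pos (by exact_mod_cast (by omega : 1 < u))
  have hpos : 0 < √(log u / N tgt (u - 1)) := sqrt_pos.mpr (by positivity)
  have hle : √(log u / N (I u) (u - 1)) ≤ √(log u) :=
    sqrt_le_sqrt (div_le_self hlog.le hn)
  linarith

theorem pullCount_lt_pullCount_tgt (h : IsAttackedUCBRun σ θ β x tgt I N hatμ0 hatμ α)
    (hx : IsConfidenceRadius β μ x) (hβ : AntitoneOn β (Set.Ici 1)) (hσ : 0 < σ) (hθ : 0 < θ)
    (hu : K < u) (hi : I u ≠ tgt) : N (I u) (u - 1) < N tgt (u - 1) := by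
  have hgap := h.pow_add_sqrt_le_sqrt hx hβ hσ hu hi
  have hn : (0 : ℝ) < N (I u) (u - 1) := by exact_mod_cast h.one_le_pullCount _ (by omega)
  have hm : (0 : ℝ) < N tgt (u - 1) := by exact_mod_cast h.one_le_pullCount tgt (by omega)
  have hlog : 0 < log u := log_pos (by exact_mod_cast (by omega : 1 < u))
  have hlt : log u / N tgt (u - 1) < log u / N (I u) (u - 1) := by
    rw [← sqrt_lt_sqrt_iff (by positivity)]
    linarith [pow_pos hθ (N (I u) (u - 1))]
  exact_mod_cast (div_lt_div_iff_of_pos_left hlog hm hn).mp hlt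

theorem pullCount_le_pullCount_tgt (h : IsAttackedUCBRun σ θ β x tgt I N hatμ0 hatμ α)
    (hx : IsConfidenceRadius β μ x) (hβ : AntitoneOn β (Set.Ici 1)) (hσ : 0 < σ) (hθ : 0 < θ)
    (hi : i ≠ tgt) (hu : 1 ≤ u) : N i u ≤ N tgt u := by
  induction u with
  | zero => omega
  | succ u ih =>
    rcases le_or_gt (u + 1) K with huK | huK
    · exact (h.pullCount_le_one i huK).trans (h.one_le_pullCount_tgt hu)
    have ih := ih (by omega)
    rw [h.pullCount_succ, h.pullCount_succ]
    by_cases hpull : I (u + 1) = i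
    · have hlt := h.pullCount_lt_pullCount_tgt hx hβ hσ hθ huK (hpull ▸ hi)
      rw [hpull, Nat.add_sub_cancel] at hlt
      rw [if_pos hpull, if_neg (by rwa [hpull])]
      omega
    · rw [if_neg hpull]
      split_ifs <;> omega

theorem pow_pullCount_pred_lt (h : IsAttackedUCBRun σ θ β x tgt I N hatμ0 hatμ α)
    (hx : IsConfidenceRadius β μ x) (hβ : AntitoneOn β (Set.Ici 1)) (hσ : 0 < σ) (hi : i ≠ tgt)
    (ht : K < t) : θ ^ (N i t - 1) < √(log t) := by
  obtain ⟨s, hs1, hst, hIs, hN, -⟩ := h.exists_last_pull (h.one_le_pullCount i ht.le)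
  have hs2 : 2 ≤ s := by
    by_contra! hs
    exact hi (by rw [← hIs, show s = 1 by omega, h.arm_one])
  rw [← hN]
  rcases le_or_gt s K with hsK | hsK
  · rw [Nat.sub_eq_zero_of_le (h.pullCount_le_one i hsK), pow_zero]
    exact one_lt_sqrt_log (by exact_mod_cast (by omega : 3 ≤ t))
  · have hpull := h.pow_pullCount_lt_sqrt_log hx hβ hσ hsK (by rwa [hIs])
    have hsucc := h.pullCount_succ i (s - 1)
    rw [Nat.sub_add_cancel (by omega), if_pos hIs] at hsucc
    rw [hIs] at hpull
    rw [hsucc, Nat.add_sub_cancel]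
    exact hpull.trans_le (sqrt_le_sqrt (log_le_log (by positivity) (by exact_mod_cast hst)))

theorem pullCount_le_ceil_logb (h : IsAttackedUCBRun σ θ β x tgt I N hatμ0 hatμ α)
    (hx : IsConfidenceRadius β μ x) (hβ : AntitoneOn β (Set.Ici 1)) (hσ : 0 < σ) (hθ : 1 < θ)
    (hi : i ≠ tgt) (ht : K < t) : (N i t : ℤ) ≤ ⌈logb θ √(log t)⌉ := by
  have hpow := h.pow_pullCount_pred_lt hx hβ hσ hi ht
  have hlt : ((N i t - 1 : ℕ) : ℤ) < ⌈logb θ √(log t)⌉ := by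
    rw [Int.lt_ceil, Int.cast_natCast,
      lt_logb_iff_rpow_lt hθ ((pow_pos (by linarith) _).trans hpow), rpow_natCast]
    exact hpow
  have := h.one_le_pullCount i ht.le
  omega

theorem pow_pullCount_le (h : IsAttackedUCBRun σ θ β x tgt I N hatμ0 hatμ α)
    (hx : IsConfidenceRadius β μ x) (hβ : AntitoneOn β (Set.Ici 1)) (hσ : 0 < σ) (hθ : 1 ≤ θ)
    (hi : i ≠ tgt) (hst : s ≤ t) (ht : K < t) : θ ^ N i s ≤ θ * √(log t) := by
  have hN : N i t = N i t - 1 + 1 := by have := h.one_le_pullCount i ht.le; omega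
  calc θ ^ N i s ≤ θ ^ N i t := pow_le_pow_right₀ hθ (h.pullCount_mono i hst)
    _ = θ * θ ^ (N i t - 1) := by rw [← pow_succ', ← hN]
    _ ≤ θ * √(log t) := by
      gcongr
      exact (h.pow_pullCount_pred_lt hx hβ hσ hi ht).le

theorem sum_attack_eq (h : IsAttackedUCBRun σ θ β x tgt I N hatμ0 hatμ α) (hn : 1 ≤ N i s) :
    ∑ v ∈ Icc 1 s with I v = i, α v = N i s * (hatμ0 i s - hatμ i s) := by
  have hn' : (0 : ℝ) < N i s := by exact_mod_cast hn
  rw [h.hatμ0_eq i s hn, h.hatμ_eq i s hn]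
  field_simp
  ring

theorem hatμ0_sub_hatμ_le (h : IsAttackedUCBRun σ θ β x tgt I N hatμ0 hatμ α)
    (hx : IsConfidenceRadius β μ x) (hβ : AntitoneOn β (Set.Ici 1)) (hσ : 0 < σ) (hθ : 0 < θ)
    (hs : 1 ≤ s) (hIs : I s = i) (hi : i ≠ tgt) (hα : α s ≠ 0) :
    hatμ0 i s - hatμ i s ≤ max 0 (μ i - μ tgt) + 4 * β (N i s) + 3 * σ * θ ^ N i s := by
  have hn := h.one_le_pullCount_of_pull hs le_rfl hIs
  have hbind := h.attack_eq s hs (by rwa [hIs]) hα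
  rw [hIs] at hbind
  have hdom : β (N tgt s) ≤ β (N i s) :=
    hβ hn (h.one_le_pullCount_tgt hs) (h.pullCount_le_pullCount_tgt hx hβ hσ hθ hi hs)
  have hmean := (abs_le.mp (hx i _ hn)).2
  have htgt := (abs_le.mp (h.abs_hatμ_tgt_sub_le hx hs)).1
  rw [← h.hatμ0_eq i s hn] at hmean
  linarith [le_max_right 0 (μ i - μ tgt)]

theorem sum_attack_le_of_binding (h : IsAttackedUCBRun σ θ β x tgt I N hatμ0 hatμ α)
    (hx : IsConfidenceRadius β μ x) (hβ : AntitoneOn β (Set.Ici 1))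
    (hnβ : MonotoneOn (fun n : ℕ => n * β n) (Set.Ici 1)) (hσ : 0 < σ) (hθ : 1 ≤ θ)
    (hs : 1 ≤ s) (hst : s ≤ t) (ht : K < t) (hIs : I s = i) (hi : i ≠ tgt) (hα : α s ≠ 0) :
    ∑ v ∈ Icc 1 s with I v = i, α v
      ≤ N i t * (max 0 (μ i - μ tgt) + 4 * β (N i t) + 3 * θ * σ * √(log t)) := by
  have hn := h.one_le_pullCount_of_pull hs le_rfl hIs
  have hNst : N i s ≤ N i t := h.pullCount_mono i hst
  have hNst' : (N i s : ℝ) ≤ N i t := by exact_mod_cast hNst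
  rw [h.sum_attack_eq hn]
  calc N i s * (hatμ0 i s - hatμ i s)
      ≤ N i s * (max 0 (μ i - μ tgt) + 4 * β (N i s) + 3 * σ * θ ^ N i s) := by
        gcongr
        exact h.hatμ0_sub_hatμ_le hx hβ hσ (by linarith) hs hIs hi hα
    _ = N i s * max 0 (μ i - μ tgt) + 4 * (N i s * β (N i s)) + 3 * σ * N i s * θ ^ N i s := by
        ring
    _ ≤ N i t * max 0 (μ i - μ tgt) + 4 * (N i t * β (N i t))
          + 3 * σ * N i t * (θ * √(log t)) := by
        have hmax := mul_le_mul_of_nonneg_right hNst' (le_max_left 0 (μ i - μ tgt))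
        have hnβst : N i s * β (N i s) ≤ N i t * β (N i t) := hnβ hn (hn.trans hNst) hNst
        have hpow : N i s * θ ^ N i s ≤ N i t * (θ * √(log t)) :=
          mul_le_mul hNst' (h.pow_pullCount_le hx hβ hσ hθ hi hst ht)
            (pow_nonneg (by linarith) _) (Nat.cast_nonneg _)
        have := mul_le_mul_of_nonneg_left hpow (by linarith : 0 ≤ 3 * σ)
        linarith
    _ = _ := by ring

theorem sum_attack_le (h : IsAttackedUCBRun σ θ β x tgt I N hatμ0 hatμ α)
    (hx : IsConfidenceRadius β μ x) (hβ : AntitoneOn β (Set.Ici 1))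
    (hnβ : MonotoneOn (fun n : ℕ => n * β n) (Set.Ici 1)) (hσ : 0 < σ) (hθ : 1 ≤ θ)
    (hi : i ≠ tgt) (ht : K < t) :
    ∑ s ∈ Icc 1 t with I s = i, α s
      ≤ N i t * (max 0 (μ i - μ tgt) + 4 * β (N i t) + 3 * θ * σ * √(log t)) := by
  have hn := h.one_le_pullCount i ht.le
  have hβ0 : 0 ≤ β (N i t) := (abs_nonneg _).trans (hx i _ hn)
  have hθ0 : 0 ≤ θ := by linarith
  have hbound : 0 ≤ N i t * (max 0 (μ i - μ tgt) + 4 * β (N i t) + 3 * θ * σ * √(log t)) := by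
    positivity
  -- rounds without an attack on `i` leave the sum unchanged, so only binding rounds need a bound
  suffices ∀ u ≤ t, ∑ s ∈ Icc 1 u with I s = i, α s
      ≤ N i t * (max 0 (μ i - μ tgt) + 4 * β (N i t) + 3 * θ * σ * √(log t)) from this t le_rfl
  intro u hu
  induction u with
  | zero => simpa using hbound
  | succ u ih =>
    by_cases hbind : I (u + 1) = i ∧ α (u + 1) ≠ 0
    · exact h.sum_attack_le_of_binding hx hβ hnβ hσ hθ (by omega) hu ht hbind.1 hi hbind.2
    have hunchanged : (if I (u + 1) = i then α (u + 1) else 0) = 0 := by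
      split_ifs with hI
      · by_contra hα
        exact hbind ⟨hI, hα⟩
      · rfl
    rw [sum_filter, sum_Icc_succ_top (by omega), hunchanged, add_zero, ← sum_filter]
    exact ih (by omega)

theorem sum_abs_attack_le (h : IsAttackedUCBRun σ θ β x tgt I N hatμ0 hatμ α)
    (hx : IsConfidenceRadius β μ x) (hβ : AntitoneOn β (Set.Ici 1))
    (hnβ : MonotoneOn (fun n : ℕ => n * β n) (Set.Ici 1)) (hσ : 0 < σ) (hθ : 1 ≤ θ)
    (ht : K < t) :
    ∑ s ∈ Icc 1 t, |α s| ≤ ∑ i with i ≠ tgt,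
      N i t * (max 0 (μ i - μ tgt) + 4 * β (N i t) + 3 * θ * σ * √(log t)) := by
  have habs : ∀ i ≠ tgt, ∀ s ∈ ({s ∈ Icc 1 t | I s = i} : Finset ℕ), |α s| = α s := by
    intro i hi s hs
    obtain ⟨hs, hIs⟩ := mem_filter.mp hs
    exact abs_of_nonneg (h.attack_nonneg s (mem_Icc.mp hs).1 (by rwa [hIs]))
  have htgt : ∑ s ∈ Icc 1 t with I s = tgt, |α s| = 0 :=
    sum_eq_zero fun s hs => by rw [h.attack_tgt s (mem_filter.mp hs).2, abs_zero]
  calc ∑ s ∈ Icc 1 t, |α s| = ∑ i, ∑ s ∈ Icc 1 t with I s = i, |α s| :=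
        (sum_fiberwise _ _ _).symm
    _ = ∑ i with i ≠ tgt, ∑ s ∈ Icc 1 t with I s = i, |α s| :=
        (sum_filter_of_ne (p := (· ≠ tgt)) fun i _ hne hi => hne (by rw [hi]; exact htgt)).symm
    _ ≤ _ := sum_le_sum fun i hi => by
        rw [sum_congr rfl (habs i (mem_filter.mp hi).2)]
        exact h.sum_attack_le hx hβ hnβ hσ hθ (mem_filter.mp hi).2 ht

end IsAttackedUCBRun

theorem ucb_attack_succeeds_whp_general
    {Ω : Type*} [MeasureSpace Ω] [IsProbabilityMeasure (ℙ : Measure Ω)]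
    (σ δ : ℝ) (K : ℕ) (hσ : 0 < σ) (hK : 1 ≤ K) (hδ : 0 < δ) (hδ' : δ ≤ 1 / 2)
    (μ : Fin K → ℝ) (X : Fin K → ℕ → Ω → ℝ) (tgt : Fin K)
    -- the reward streams: i.i.d., sub-Gaussian with variance proxy σ²
    (hindep : ∀ i, iIndepFun (X i) ℙ)
    (hint : ∀ i n (s : ℝ), Integrable (fun ω => Real.exp (s * (X i n ω - μ i))) ℙ)
    (hsub : ∀ i n (s : ℝ),
      ∫ ω, Real.exp (s * (X i n ω - μ i)) ≤ Real.exp (s ^ 2 * σ ^ 2 / 2))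
    -- the process, defined path-wise
    (I : ℕ → Ω → Fin K) (N : Fin K → ℕ → Ω → ℕ)
    (hatμ0 hatμ : Fin K → ℕ → Ω → ℝ) (α : ℕ → Ω → ℝ)
    -- pull counts
    (hN : ∀ ω i t, N i t ω = ((Finset.Icc 1 t).filter (fun s => I s ω = i)).card)
    -- initialization: arm `tgt` is pulled in round 1, each arm once in rounds 1..K
    (hI1 : ∀ ω, I 1 ω = tgt)
    (hinit : ∀ ω i, N i K ω = 1)
    -- pre-attack empirical means
    (hμ0 : ∀ ω i t, 1 ≤ N i t ω →
      hatμ0 i t ω = (∑ j ∈ Finset.Icc 1 (N i t ω), X i j ω) / (N i t ω))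
    -- post-attack empirical means
    (hμ : ∀ ω i t, 1 ≤ N i t ω →
      hatμ i t ω = ((∑ j ∈ Finset.Icc 1 (N i t ω), X i j ω)
        - ∑ s ∈ (Finset.Icc 1 t).filter (fun s => I s ω = i), α s ω) / (N i t ω))
    -- UCB arm selection after the initialization rounds
    (hUCB : ∀ ω t, K < t → ∀ i : Fin K,
      hatμ i (t - 1) ω + 3 * σ * Real.sqrt (Real.log t / N i (t - 1) ω)
        ≤ hatμ (I t ω) (t - 1) ω + 3 * σ * Real.sqrt (Real.log t / N (I t ω) (t - 1) ω))
    -- pulls of the target arm are never attacked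
    (hαtgt : ∀ ω t, I t ω = tgt → α t ω = 0)
    -- attack rule: after any pull of a non-target arm, the smallest (in absolute
    -- value) nonnegative attack ensuring the post-attack mean drops below
    -- `hatμ tgt t − 2β(N_tgt(t)) − 3σθ^{N_i(t)}`
    (hatk : ∀ ω t, 1 ≤ t → I t ω ≠ tgt →
      0 ≤ α t ω ∧
      hatμ (I t ω) t ω ≤ hatμ tgt t ω - 2 * attackBeta σ K δ (N tgt t ω)
        - 3 * σ * (1.1 : ℝ) ^ (N (I t ω) t ω) ∧
      (α t ω ≠ 0 → hatμ (I t ω) t ω = hatμ tgt t ω - 2 * attackBeta σ K δ (N tgt t ω)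
        - 3 * σ * (1.1 : ℝ) ^ (N (I t ω) t ω))) :
    ENNReal.ofReal (1 - δ) ≤
      ℙ {ω | ∀ t, K < t →
        (∀ i : Fin K, i ≠ tgt →
          (N i t ω : ℤ) ≤ ⌈Real.logb 1.1 (Real.sqrt (Real.log t))⌉) ∧
        ∑ s ∈ Finset.Icc 1 t, |α s ω| ≤
          ∑ i ∈ Finset.univ.filter (fun i => i ≠ tgt),
            (N i t ω : ℝ) * (max 0 (μ i - μ tgt) + 4 * attackBeta σ K δ (N i t ω)
              + 3 * 1.1 * σ * Real.sqrt (Real.log t))} := by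
  have hsubG : ∀ i n, HasSubgaussianMGF (fun ω => X i n ω - μ i) ⟨σ ^ 2, sq_nonneg σ⟩ ℙ :=
    fun i n => ⟨hint i n, fun s => by
      change _ ≤ exp (σ ^ 2 * s ^ 2 / 2)
      exact (hsub i n s).trans_eq (by ring_nf)⟩
  have hβ := attackBeta_antitoneOn (σ := σ) hK hδ hδ'
  have hnβ := natCast_mul_attackBeta_monotoneOn (σ := σ) hK hδ hδ'
  refine (ofReal_one_sub_le_measure_isConfidenceRadius hσ hK hδ hδ' μ X hindep hsubG).trans
    (measure_mono fun ω hω t ht => ?_)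
  have hrun : IsAttackedUCBRun σ 1.1 (attackBeta σ K δ) (fun i n => X i n ω) tgt (I · ω)
      (N · · ω) (hatμ0 · · ω) (hatμ · · ω) (α · ω) :=
    { pullCount_eq := hN ω, arm_one := hI1 ω, pullCount_init := hinit ω, hatμ0_eq := hμ0 ω,
      hatμ_eq := hμ ω, ucb := hUCB ω, attack_tgt := hαtgt ω,
      attack_nonneg := fun t h1 h2 => (hatk ω t h1 h2).1,
      attack_le := fun t h1 h2 => (hatk ω t h1 h2).2.1,
      attack_eq := fun t h1 h2 => (hatk ω t h1 h2).2.2 }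
  exact ⟨fun i hi => hrun.pullCount_le_ceil_logb hω hβ hσ (by norm_num) hi ht,
    hrun.sum_abs_attack_le hω hβ hnβ hσ (by norm_num) ht⟩

/-- Theorem 1 (probabilistic form). Run the UCB-with-attack process (`θ = 1.1`)
path-wise on pre-attack reward streams `r⁰_i(n) = X i n ω`, where for each arm `i`
the sequence `(X i n)_{n ≥ 1}` is i.i.d. with `X i n − μ i` sub-Gaussian with
variance proxy `σ²`. Then with probability at least `1 − δ`, simultaneously for
all rounds `t > K`: every non-target arm `i` satisfies
`N_i(t) ≤ ⌈log_θ √(log t)⌉`, and the cumulative attack cost satisfies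
`∑_{s ≤ t} |α_s| ≤ ∑_{i ≠ tgt} N_i(t)·(Δ_i⁺ + 4β(N_i(t)) + 3θσ√(log t))`.

Process data (per sample `ω`): `tgt` is the target arm, `I t ω` the arm pulled in
round `t`, `N i t ω` the number of pulls of arm `i` in rounds `1..t`,
`hatμ0 i t ω` / `hatμ i t ω` the pre- and post-attack empirical means of arm `i`
after `t` rounds, and `α t ω` the attack in round `t`. -/
theorem ucb_attack_succeeds_whp
    {Ω : Type*} [MeasureSpace Ω] [IsProbabilityMeasure (ℙ : Measure Ω)]
    (σ δ : ℝ) (K : ℕ) (hσ : 0 < σ) (hK : 1 ≤ K) (hδ : 0 < δ) (hδ' : δ ≤ 1 / 2)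
    (μ : Fin K → ℝ) (X : Fin K → ℕ → Ω → ℝ) (tgt : Fin K)
    -- the reward streams: i.i.d., sub-Gaussian with variance proxy σ²
    (hmeas : ∀ i n, Measurable (X i n))
    (hindep : ∀ i, iIndepFun (X i) ℙ)
    (hident : ∀ i n, IdentDistrib (X i n) (X i 1) ℙ ℙ)
    (hint : ∀ i n (s : ℝ), Integrable (fun ω => Real.exp (s * (X i n ω - μ i))) ℙ)
    (hsub : ∀ i n (s : ℝ),
      ∫ ω, Real.exp (s * (X i n ω - μ i)) ≤ Real.exp (s ^ 2 * σ ^ 2 / 2))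
    -- the process, defined path-wise
    (I : ℕ → Ω → Fin K) (N : Fin K → ℕ → Ω → ℕ)
    (hatμ0 hatμ : Fin K → ℕ → Ω → ℝ) (α : ℕ → Ω → ℝ)
    -- pull counts
    (hN : ∀ ω i t, N i t ω = ((Finset.Icc 1 t).filter (fun s => I s ω = i)).card)
    -- initialization: arm `tgt` is pulled in round 1, each arm once in rounds 1..K
    (hI1 : ∀ ω, I 1 ω = tgt)
    (hinit : ∀ ω i, N i K ω = 1)
    -- pre-attack empirical means
    (hμ0 : ∀ ω i t, 1 ≤ N i t ω →
      hatμ0 i t ω = (∑ j ∈ Finset.Icc 1 (N i t ω), X i j ω) / (N i t ω))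
    -- post-attack empirical means
    (hμ : ∀ ω i t, 1 ≤ N i t ω →
      hatμ i t ω = ((∑ j ∈ Finset.Icc 1 (N i t ω), X i j ω)
        - ∑ s ∈ (Finset.Icc 1 t).filter (fun s => I s ω = i), α s ω) / (N i t ω))
    -- UCB arm selection after the initialization rounds
    (hUCB : ∀ ω t, K < t → ∀ i : Fin K,
      hatμ i (t - 1) ω + 3 * σ * Real.sqrt (Real.log t / N i (t - 1) ω)
        ≤ hatμ (I t ω) (t - 1) ω + 3 * σ * Real.sqrt (Real.log t / N (I t ω) (t - 1) ω))
    -- pulls of the target arm are never attacked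
    (hαtgt : ∀ ω t, I t ω = tgt → α t ω = 0)
    -- attack rule: after any pull of a non-target arm, the smallest (in absolute
    -- value) nonnegative attack ensuring the post-attack mean drops below
    -- `hatμ tgt t − 2β(N_tgt(t)) − 3σθ^{N_i(t)}`
    (hatk : ∀ ω t, 1 ≤ t → I t ω ≠ tgt →
      0 ≤ α t ω ∧
      hatμ (I t ω) t ω ≤ hatμ tgt t ω - 2 * attackBeta σ K δ (N tgt t ω)
        - 3 * σ * (1.1 : ℝ) ^ (N (I t ω) t ω) ∧
      (α t ω ≠ 0 → hatμ (I t ω) t ω = hatμ tgt t ω - 2 * attackBeta σ K δ (N tgt t ω)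
        - 3 * σ * (1.1 : ℝ) ^ (N (I t ω) t ω))) :
    ENNReal.ofReal (1 - δ) ≤
      ℙ {ω | ∀ t, K < t →
        (∀ i : Fin K, i ≠ tgt →
          (N i t ω : ℤ) ≤ ⌈Real.logb 1.1 (Real.sqrt (Real.log t))⌉) ∧
        ∑ s ∈ Finset.Icc 1 t, |α s ω| ≤
          ∑ i ∈ Finset.univ.filter (fun i => i ≠ tgt),
            (N i t ω : ℝ) * (max 0 (μ i - μ tgt) + 4 * attackBeta σ K δ (N i t ω)
              + 3 * 1.1 * σ * Real.sqrt (Real.log t))} :=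
  ucb_attack_succeeds_whp_general σ δ K hσ hK hδ hδ' μ X tgt hindep hint hsub I N hatμ0 hatμ α hN
    hI1 hinit hμ0 hμ hUCB hαtgt hatk
end
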